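/- Suppose a sequence of continuous functions u_i : Ω̄ × [0,T] → ℝ converges uniformly to a continuous function u, a sequence θ_i ∈ (0,1) decreases to 0, and there is a constant C > 0 with ∫_Ω |min(u_i(x,t), 0) + θ_i|² dx ≤ C(θ_i² + θ_i + θ_i^{1/2}) for almost every t ∈ [0,T] and every i. Then u(x,t) ≥ 0 for all (x,t) ∈ Ω̄ × [0,T]. -/

import Mathlib

/-!
Suppose `u p < 0` at some `p = (x₀, t₀)`. Uniform convergence, continuity of `u` and `θᵢ → 0`
give a relative neighbourhood `V` of `p` and a tail of indices on which
`min(uᵢ, 0) + θᵢ < u p / 2 < 0`. The neighbourhood contains `(Ω ∩ B(x₀, δ)) × (time interval)`,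
and `Ω ∩ B(x₀, δ)` is a nonempty open set, hence of positive measure `m`. For each index in the
tail the a.e. bound holds at some time of that interval, where the integral is at least
`(u p / 2)² m > 0`. The right-hand side `C(θᵢ² + θᵢ + θᵢ^{1/2})` tends to `0`: contradiction.
-/

open MeasureTheory Filter Topology Set

theorem TendstoUniformlyOn.tendsto_prod_nhdsWithin {ι X β : Type*} [TopologicalSpace X]
    [UniformSpace β] {l : Filter ι} {F : ι → X → β} {f : X → β} {K : Set X} {x : X}
    (hF : TendstoUniformlyOn F f l K) (hf : ContinuousWithinAt f K x) (hx : x ∈ K) :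
    Tendsto (fun p : ι × X => F p.1 p.2) (l ×ˢ 𝓝[K] x) (𝓝 (f x)) :=
  (hf.tendsto.comp tendsto_snd).congr_uniformity
    (tendstoLocallyUniformlyOn_iff_forall_tendsto.mp hF.tendstoLocallyUniformlyOn x hx)

theorem exists_mem_inter_of_ae_restrict {X : Type*} [TopologicalSpace X] [MeasurableSpace X]
    [OpensMeasurableSpace X] {μ : Measure X} [μ.IsOpenPosMeasure] {s U : Set X} {x : X}
    {P : X → Prop} (hU : IsOpen U) (hxU : x ∈ U) (hx : x ∈ closure (interior s))
    (h : ∀ᵐ y ∂μ.restrict s, P y) : ∃ y ∈ s ∩ U, P y := by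
  have hW : IsOpen (U ∩ interior s) := hU.inter isOpen_interior
  have : (ae (μ.restrict (U ∩ interior s))).NeBot :=
    ae_restrict_neBot.mpr (hW.measure_ne_zero μ (mem_closure_iff.mp hx U hU hxU))
  obtain ⟨y, hPy, hyU, hys⟩ :=
    ((ae_restrict_of_ae_restrict_of_subset (inter_subset_right.trans interior_subset) h).and
      (ae_restrict_mem hW.measurableSet)).exists
  exact ⟨y, ⟨interior_subset hys, hyU⟩, hPy⟩

theorem measureReal_mul_le_setIntegral_of_le_on {X : Type*} [MeasurableSpace X] {μ : Measure X}
    {s S : Set X} {f : X → ℝ} {c : ℝ} (hf : IntegrableOn f s μ) (hf0 : 0 ≤ᵐ[μ.restrict s] f)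
    (hSs : S ⊆ s) (hS : MeasurableSet S) (hSμ : μ S ≠ ⊤) (hc : ∀ x ∈ S, c ≤ f x) :
    μ.real S * c ≤ ∫ x in s, f x ∂μ :=
  (setIntegral_ge_of_const_le hS hSμ hc (hf.mono_set hSs)).trans
    (setIntegral_mono_set hf hf0 hSs.eventuallyLE)

theorem measureReal_mul_sq_le_setIntegral_sq_abs {X : Type*} [MetricSpace X] [ProperSpace X]
    [MeasurableSpace X] [BorelSpace X] {μ : Measure X} [IsFiniteMeasureOnCompacts μ]
    {Ω S : Set X} {g : X → ℝ} {c : ℝ} (hΩ : Bornology.IsBounded Ω)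
    (hg : ContinuousOn g (closure Ω)) (hSΩ : S ⊆ Ω) (hS : MeasurableSet S)
    (hgc : ∀ x ∈ S, g x < c) (hc : c ≤ 0) :
    μ.real S * c ^ 2 ≤ ∫ x in Ω, |g x| ^ 2 ∂μ :=
  measureReal_mul_le_setIntegral_of_le_on
    ((hg.abs.pow 2).integrableOn_compact hΩ.isCompact_closure |>.mono_set subset_closure)
    (ae_of_all _ fun _ => by positivity) hSΩ hS (hΩ.subset hSΩ).measure_lt_top.ne
    fun x hx => by rw [sq_abs]; nlinarith [hgc x hx]

theorem measureReal_ball_inter_pos {X : Type*} [MetricSpace X] [ProperSpace X]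
    [MeasurableSpace X] [OpensMeasurableSpace X] {μ : Measure X} [μ.IsOpenPosMeasure]
    [IsFiniteMeasureOnCompacts μ] {Ω : Set X} {x : X} {δ : ℝ} (hΩo : IsOpen Ω)
    (hΩb : Bornology.IsBounded Ω) (hx : x ∈ closure Ω) (hδ : 0 < δ) :
    0 < μ.real (Metric.ball x δ ∩ Ω) :=
  ENNReal.toReal_pos ((Metric.isOpen_ball.inter hΩo).measure_ne_zero μ
      (mem_closure_iff.mp hx _ Metric.isOpen_ball (Metric.mem_ball_self hδ)))
    (hΩb.subset inter_subset_right).measure_lt_top.ne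

theorem tendsto_const_mul_sq_add_add_rpow_half {ι : Type*} {l : Filter ι} {θ : ι → ℝ}
    (hθ : Tendsto θ l (𝓝 0)) (C : ℝ) :
    Tendsto (fun i => C * (θ i ^ 2 + θ i + θ i ^ ((1 : ℝ) / 2))) l (𝓝 0) := by
  simpa using (((hθ.pow 2).add hθ).add
    (hθ.rpow_const (p := 1 / 2) (Or.inr (by norm_num)))).const_mul C

theorem stmt_14_general {d : ℕ} (Ω : Set (EuclideanSpace ℝ (Fin d))) (T : ℝ)
    (hΩo : IsOpen Ω) (hΩb : Bornology.IsBounded Ω) (hT : 0 < T)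
    (ui : ℕ → EuclideanSpace ℝ (Fin d) × ℝ → ℝ) (u : EuclideanSpace ℝ (Fin d) × ℝ → ℝ)
    (hui : ∀ i, ContinuousOn (ui i) (closure Ω ×ˢ Set.Icc 0 T))
    (hu : ContinuousOn u (closure Ω ×ˢ Set.Icc 0 T))
    (hconv : TendstoUniformlyOn ui u atTop (closure Ω ×ˢ Set.Icc 0 T))
    (θ : ℕ → ℝ)
    (hθ0 : Tendsto θ atTop (nhds 0))
    (C : ℝ)
    (hbound : ∀ i, ∀ᵐ t ∂(volume.restrict (Set.Icc (0 : ℝ) T)),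
      ∫ x in Ω, |min (ui i (x, t)) 0 + θ i| ^ 2
        ≤ C * ((θ i) ^ 2 + θ i + (θ i) ^ ((1 : ℝ) / 2))) :
    ∀ p ∈ closure Ω ×ˢ Set.Icc (0 : ℝ) T, 0 ≤ u p := by
  intro p hp
  by_contra! hneg
  have hlim : Tendsto (fun q : ℕ × _ => min (ui q.1 q.2) 0 + θ q.1)
      (atTop ×ˢ 𝓝[closure Ω ×ˢ Icc 0 T] p) (𝓝 (u p)) := by
    simpa [min_eq_left hneg.le] using
      ((hconv.tendsto_prod_nhdsWithin (hu p hp) hp).min (tendsto_const_nhds (x := 0))).add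
        (hθ0.comp tendsto_fst)
  obtain ⟨I, hI, V, hV, hIV⟩ := mem_prod_iff.mp (hlim (Iio_mem_nhds (by linarith : u p < u p / 2)))
  obtain ⟨δ, hδ, hδV⟩ := Metric.mem_nhdsWithin_iff.mp hV
  have hS : 0 < volume.real (Metric.ball p.1 δ ∩ Ω) := measureReal_ball_inter_pos hΩo hΩb hp.1 hδ
  obtain ⟨i, hi, hsmall⟩ := ((eventually_mem_set.mpr hI).and
    ((tendsto_const_mul_sq_add_add_rpow_half hθ0 C).eventually_lt_const
      (mul_pos hS (by nlinarith : 0 < (u p / 2) ^ 2)))).exists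
  obtain ⟨t, ⟨ht, htδ⟩, hbt⟩ := exists_mem_inter_of_ae_restrict Metric.isOpen_ball
    (Metric.mem_ball_self (x := p.2) hδ) (by rw [interior_Icc, closure_Ioo hT.ne]; exact hp.2)
    (hbound i)
  have hslice : ContinuousOn (fun x => min (ui i (x, t)) 0 + θ i) (closure Ω) :=
    (((hui i).comp (continuous_id.prodMk continuous_const).continuousOn
      fun x hx => ⟨hx, ht⟩).inf continuousOn_const).add continuousOn_const
  have hlt : ∀ x ∈ Metric.ball p.1 δ ∩ Ω, min (ui i (x, t)) 0 + θ i < u p / 2 :=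
    fun x hx => hIV <| mk_mem_prod hi <| hδV
      ⟨by simpa [Prod.dist_eq] using max_lt hx.1 htδ, subset_closure hx.2, ht⟩
  linarith [measureReal_mul_sq_le_setIntegral_sq_abs (μ := volume) hΩb hslice inter_subset_right
    (Metric.isOpen_ball.inter hΩo).measurableSet hlt (by linarith)]

/-- If continuous uᵢ → u uniformly on Ω̄ × [0,T], θᵢ ∈ (0,1) decreases to 0, and
ess sup_t ∫_Ω |min(uᵢ,0) + θᵢ|² ≤ C(θᵢ² + θᵢ + θᵢ^{1/2}), then u ≥ 0 on Ω̄ × [0,T]. -/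
theorem stmt_14 {d : ℕ} (Ω : Set (EuclideanSpace ℝ (Fin d))) (T : ℝ)
    (hΩo : IsOpen Ω) (hΩb : Bornology.IsBounded Ω) (hΩpos : 0 < volume Ω) (hT : 0 < T)
    (ui : ℕ → EuclideanSpace ℝ (Fin d) × ℝ → ℝ) (u : EuclideanSpace ℝ (Fin d) × ℝ → ℝ)
    (hui : ∀ i, ContinuousOn (ui i) (closure Ω ×ˢ Set.Icc 0 T))
    (hu : ContinuousOn u (closure Ω ×ˢ Set.Icc 0 T))
    (hconv : TendstoUniformlyOn ui u atTop (closure Ω ×ˢ Set.Icc 0 T))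
    (θ : ℕ → ℝ) (hθ : ∀ i, 0 < θ i ∧ θ i < 1) (hθanti : Antitone θ)
    (hθ0 : Tendsto θ atTop (nhds 0))
    (C : ℝ) (hC : 0 < C)
    (hbound : ∀ i, ∀ᵐ t ∂(volume.restrict (Set.Icc (0 : ℝ) T)),
      ∫ x in Ω, |min (ui i (x, t)) 0 + θ i| ^ 2
        ≤ C * ((θ i) ^ 2 + θ i + (θ i) ^ ((1 : ℝ) / 2))) :
    ∀ p ∈ closure Ω ×ˢ Set.Icc (0 : ℝ) T, 0 ≤ u p :=
  stmt_14_general Ω T hΩo hΩb hT ui u hui hu hconv θ hθ0 C hbound
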